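/- arXiv:2404.10972 — 3 statements merged into one kernel-verified Lean document; each statement's English description precedes it below -/
import Mathlib

section
/- Let u : ℝ^d × [0,T) → ℝ be upper semicontinuous, bounded from above, with M := sup_{ℝ^d × [0,T)} u − sup_{ℝ^d} u(·,0) > 0. Let Φ_R(x) = (|x|²/R²)/(1+|x|²/R²). Then there exists (x₀,t₀) ∈ ℝ^d × (0,T) such that for all 0 < h < M/(4T) and all R > 0, the function ψ(x,t) = u(x,t) − M·Φ_R(x − x₀) − h·t attains its maximum over ℝ^d × [0,T] at some point (x_h, t_h) with t_h > 0. -/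
noncomputable section

open Set

open Filter Topology Metric in
/-- An upper semicontinuous function, bounded above on a compact set, attains its
maximum on that set. -/
lemma usc_max_on_compact_aux {X : Type*} [PseudoMetricSpace X] {K : Set X} (hK : IsCompact K)
    {f : X → ℝ} {p₀ : X} (hp₀ : p₀ ∈ K)
    (hf : UpperSemicontinuousOn f K) (hb : BddAbove (f '' K)) :
    ∃ p ∈ K, ∀ q ∈ K, f q ≤ f p := by
  set G := sSup (f '' K) with hG
  have hne : (f '' K).Nonempty := ⟨f p₀, ⟨p₀, hp₀, rfl⟩⟩
  have hseq : ∀ n : ℕ, ∃ x, x ∈ K ∧ G - 1 / (n + 1) < f x := by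
    intro n
    have hpos : (0 : ℝ) < 1 / (n + 1) := by positivity
    have hlt : G - 1 / (n + 1) < G := by linarith
    obtain ⟨y, hy, hy'⟩ := exists_lt_of_lt_csSup hne hlt
    obtain ⟨x, hx, rfl⟩ := hy
    exact ⟨x, hx, hy'⟩
  choose x hxK hxf using hseq
  obtain ⟨p, hpK, φ, hφ, hφt⟩ := hK.tendsto_subseq hxK
  refine ⟨p, hpK, ?_⟩
  have hfpG : f p ≤ G := le_csSup hb ⟨p, hpK, rfl⟩
  rcases eq_or_lt_of_le hfpG with he | hlt
  · intro q hq; rw [he]; exact le_csSup hb ⟨q, hq, rfl⟩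
  · exfalso
    set y := (f p + G) / 2 with hy
    have h1 : f p < y := by rw [hy]; linarith
    have h2 : y < G := by rw [hy]; linarith
    have hev : ∀ᶠ q in 𝓝[K] p, f q < y := hf p hpK y h1
    have htend : Tendsto (fun n => x (φ n)) atTop (𝓝[K] p) := by
      apply tendsto_nhdsWithin_of_tendsto_nhds_of_eventually_within _ hφt
      exact Eventually.of_forall fun n => hxK (φ n)
    have hev2 : ∀ᶠ n in atTop, f (x (φ n)) < y := htend.eventually hev
    obtain ⟨N, hN⟩ := eventually_atTop.1 hev2
    obtain ⟨n₀, hn₀⟩ := exists_nat_one_div_lt (show (0:ℝ) < G - y by linarith)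
    set n := max N n₀ with hn
    have hlow : G - 1 / (φ n + 1) < f (x (φ n)) := hxf (φ n)
    have hmono : (n : ℝ) ≤ (φ n : ℝ) := by exact_mod_cast hφ.le_apply
    have hnn₀ : (n₀ : ℝ) ≤ (n : ℝ) := by exact_mod_cast le_max_right N n₀
    have hd1 : (0:ℝ) < (n₀ : ℝ) + 1 := by positivity
    have hd2 : (0:ℝ) < (φ n : ℝ) + 1 := by positivity
    have hdiv : 1 / ((φ n : ℝ) + 1) ≤ 1 / ((n₀ : ℝ) + 1) := by
      apply one_div_le_one_div_of_le hd1; linarith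
    have hup : f (x (φ n)) < y := hN n (le_max_left N n₀)
    have : 1 / ((n₀ : ℝ) + 1) < G - y := hn₀
    linarith

/-- Lemma "BumpToAttainMax": after subtracting the penalization
`M Φ_R(x−x₀) + h t`, an upper semicontinuous function bounded above whose supremum
exceeds its initial-slice supremum by `M > 0` attains its maximum at a positive time. -/
theorem stmt_5 {d : ℕ} (T : ℝ) (hT : 0 < T)
    (u : EuclideanSpace ℝ (Fin d) × ℝ → ℝ)
    (husc : UpperSemicontinuousOn u (univ ×ˢ Icc (0 : ℝ) T))
    (B : ℝ) (hB : ∀ p ∈ univ ×ˢ Icc (0 : ℝ) T, u p ≤ B)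
    (M : ℝ)
    (hMdef : M = sSup (u '' (univ ×ˢ Ico (0 : ℝ) T)) -
        sSup (Set.range fun x : EuclideanSpace ℝ (Fin d) => u (x, 0)))
    (hM : 0 < M) :
    ∃ x₀ : EuclideanSpace ℝ (Fin d), ∃ t₀ ∈ Ioo (0 : ℝ) T,
      ∀ h : ℝ, 0 < h → h < M / (4 * T) → ∀ R > (0 : ℝ),
        ∃ p : EuclideanSpace ℝ (Fin d) × ℝ, p.2 ∈ Ioc (0 : ℝ) T ∧
          IsMaxOn (fun q : EuclideanSpace ℝ (Fin d) × ℝ =>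
              u q - M * ((‖q.1 - x₀‖ ^ 2 / R ^ 2) / (1 + ‖q.1 - x₀‖ ^ 2 / R ^ 2)) - h * q.2)
            (univ ×ˢ Icc (0 : ℝ) T) p := by
  classical
  set D : Set (EuclideanSpace ℝ (Fin d) × ℝ) := univ ×ˢ Icc (0 : ℝ) T with hD
  have h0D : ((0 : EuclideanSpace ℝ (Fin d)), (0 : ℝ)) ∈ D := by
    refine ⟨mem_univ _, ⟨le_refl _, hT.le⟩⟩
  have hDne : (u '' D).Nonempty := ⟨u (0, 0), ⟨(0, 0), h0D, rfl⟩⟩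
  have hbdd : BddAbove (u '' D) := ⟨B, by rintro _ ⟨q, hq, rfl⟩; exact hB q hq⟩
  set G := sSup (u '' D) with hG
  set S := sSup (u '' (univ ×ˢ Ico (0 : ℝ) T)) with hS
  set S0 := sSup (Set.range fun x : EuclideanSpace ℝ (Fin d) => u (x, 0)) with hS0d
  have hsub1 : u '' (univ ×ˢ Ico (0 : ℝ) T) ⊆ u '' D :=
    image_mono (prod_mono Subset.rfl Ico_subset_Icc_self)
  have hSne : (u '' (univ ×ˢ Ico (0 : ℝ) T)).Nonempty :=
    ⟨u (0, 0), ⟨(0, 0), ⟨mem_univ _, ⟨le_refl _, hT⟩⟩, rfl⟩⟩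
  have hSG : S ≤ G := csSup_le_csSup hbdd hSne hsub1
  have hbdd0 : BddAbove (Set.range fun x : EuclideanSpace ℝ (Fin d) => u (x, 0)) := by
    refine ⟨B, ?_⟩
    rintro _ ⟨x, rfl⟩
    exact hB (x, 0) ⟨mem_univ _, ⟨le_refl _, hT.le⟩⟩
  have hslice0 : ∀ x : EuclideanSpace ℝ (Fin d), u (x, 0) ≤ S0 := fun x =>
    le_csSup hbdd0 ⟨x, rfl⟩
  have hS0eq : S0 = S - M := by linarith
  -- pick a point nearly attaining the global supremum G
  obtain ⟨v, hv, hvlt⟩ := exists_lt_of_lt_csSup hDne (show G - M / 2 < G by linarith)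
  obtain ⟨p₀, hp₀D, rfl⟩ := hv
  obtain ⟨x₀, t₀⟩ := p₀
  have hp₀t : t₀ ∈ Icc (0 : ℝ) T := hp₀D.2
  have hup₀ : G - M / 2 < u (x₀, t₀) := hvlt
  have ht₀pos : 0 < t₀ := by
    rcases hp₀t.1.lt_or_eq with h' | h'
    · exact h'
    · exfalso
      have h1 : u (x₀, t₀) ≤ S0 := by rw [← h']; exact hslice0 x₀
      linarith
  refine ⟨x₀, T / 2, ⟨by linarith, by linarith⟩, ?_⟩
  intro h hh0 hhM R hR
  set ψ : EuclideanSpace ℝ (Fin d) × ℝ → ℝ := fun q =>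
    u q - M * ((‖q.1 - x₀‖ ^ 2 / R ^ 2) / (1 + ‖q.1 - x₀‖ ^ 2 / R ^ 2)) - h * q.2 with hψdef
  clear_value ψ
  have hR2 : (0 : ℝ) < R ^ 2 := by positivity
  have hfrac_nonneg : ∀ q : EuclideanSpace ℝ (Fin d) × ℝ,
      0 ≤ (‖q.1 - x₀‖ ^ 2 / R ^ 2) / (1 + ‖q.1 - x₀‖ ^ 2 / R ^ 2) := fun q => by positivity
  have hfrac_le_one : ∀ q : EuclideanSpace ℝ (Fin d) × ℝ,
      (‖q.1 - x₀‖ ^ 2 / R ^ 2) / (1 + ‖q.1 - x₀‖ ^ 2 / R ^ 2) ≤ 1 := by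
    intro q
    have hs : 0 ≤ ‖q.1 - x₀‖ ^ 2 / R ^ 2 := by positivity
    rw [div_le_one (by positivity)]
    linarith
  have hhT : h * T < M / 4 := by
    have h1 : h * T < M / (4 * T) * T := by
      exact mul_lt_mul_of_pos_right hhM hT
    have h2 : M / (4 * T) * T = M / 4 := by field_simp
    linarith
  -- value at the near-maximum point
  have hψp₀ : G - 3 * M / 4 < ψ (x₀, t₀) := by
    have hzero : ψ (x₀, t₀) = u (x₀, t₀) - h * t₀ := by
      simp [hψdef]
    have hht₀ : h * t₀ ≤ h * T := mul_le_mul_of_nonneg_left hp₀t.2 hh0.le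
    rw [hzero]
    linarith
  -- the compact region
  set K : Set (EuclideanSpace ℝ (Fin d) × ℝ) :=
    Metric.closedBall x₀ (3 * R) ×ˢ Icc (0 : ℝ) T with hK
  have hKc : IsCompact K := (isCompact_closedBall _ _).prod isCompact_Icc
  have hKD : K ⊆ D := prod_mono (subset_univ _) Subset.rfl
  have hp₀K : ((x₀, t₀) : EuclideanSpace ℝ (Fin d) × ℝ) ∈ K :=
    ⟨Metric.mem_closedBall_self (by positivity), hp₀t⟩
  -- upper semicontinuity of ψ on K
  have hden : ∀ q : EuclideanSpace ℝ (Fin d) × ℝ,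
      (1 : ℝ) + ‖q.1 - x₀‖ ^ 2 / R ^ 2 ≠ 0 := fun q => by positivity
  have hnum : Continuous fun q : EuclideanSpace ℝ (Fin d) × ℝ => ‖q.1 - x₀‖ ^ 2 / R ^ 2 :=
    (((continuous_fst.sub continuous_const).norm).pow 2).div_const _
  have hfrac : Continuous fun q : EuclideanSpace ℝ (Fin d) × ℝ =>
      (‖q.1 - x₀‖ ^ 2 / R ^ 2) / (1 + ‖q.1 - x₀‖ ^ 2 / R ^ 2) :=
    hnum.div (continuous_const.add hnum) hden
  have hg : Continuous fun q : EuclideanSpace ℝ (Fin d) × ℝ =>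
      -(M * ((‖q.1 - x₀‖ ^ 2 / R ^ 2) / (1 + ‖q.1 - x₀‖ ^ 2 / R ^ 2))) - h * q.2 :=
    ((continuous_const.mul hfrac).neg).sub (continuous_const.mul continuous_snd)
  have hψeq : ψ = fun q => u q +
      (-(M * ((‖q.1 - x₀‖ ^ 2 / R ^ 2) / (1 + ‖q.1 - x₀‖ ^ 2 / R ^ 2))) - h * q.2) := by
    funext q; simp [hψdef]; ring
  have hψusc : UpperSemicontinuousOn ψ K := by
    rw [hψeq]
    exact (husc.mono hKD).add (hg.continuousOn.upperSemicontinuousOn)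
  -- ψ is bounded above on K
  have hψle : ∀ q ∈ D, ψ q ≤ u q := by
    intro q hq
    have h1 : 0 ≤ M * ((‖q.1 - x₀‖ ^ 2 / R ^ 2) / (1 + ‖q.1 - x₀‖ ^ 2 / R ^ 2)) :=
      mul_nonneg hM.le (hfrac_nonneg q)
    have h2 : 0 ≤ h * q.2 := mul_nonneg hh0.le hq.2.1
    simp only [hψdef]
    linarith
  have huq : ∀ q ∈ D, u q ≤ G := fun q hq => le_csSup hbdd ⟨q, hq, rfl⟩
  have hbK : BddAbove (ψ '' K) := by
    refine ⟨G, ?_⟩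
    rintro _ ⟨q, hq, rfl⟩
    exact le_trans (hψle q (hKD hq)) (huq q (hKD hq))
  obtain ⟨p, hpK, hpmax⟩ := usc_max_on_compact_aux hKc hp₀K hψusc hbK
  have hψp₀p : ψ (x₀, t₀) ≤ ψ p := hpmax _ hp₀K
  -- far-field bound
  have hfar : ∀ q ∈ D, q ∉ K → ψ q ≤ G - 9 * M / 10 := by
    intro q hq hqK
    have hq1 : q.1 ∉ Metric.closedBall x₀ (3 * R) := by
      intro hc
      exact hqK ⟨hc, hq.2⟩
    have hdist : 3 * R < dist q.1 x₀ := by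
      simpa [Metric.mem_closedBall, not_le] using hq1
    have hnorm : 3 * R < ‖q.1 - x₀‖ := by rw [dist_eq_norm] at hdist; exact hdist
    have hs9 : (9 : ℝ) ≤ ‖q.1 - x₀‖ ^ 2 / R ^ 2 := by
      rw [le_div_iff₀ hR2]
      nlinarith
    have hfracge : (9 : ℝ) / 10 ≤
        (‖q.1 - x₀‖ ^ 2 / R ^ 2) / (1 + ‖q.1 - x₀‖ ^ 2 / R ^ 2) := by
      rw [div_le_div_iff₀ (by norm_num) (by positivity)]
      linarith
    have h1 : M * (9 / 10) ≤ M * ((‖q.1 - x₀‖ ^ 2 / R ^ 2) / (1 + ‖q.1 - x₀‖ ^ 2 / R ^ 2)) :=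
      mul_le_mul_of_nonneg_left hfracge hM.le
    have h2 : 0 ≤ h * q.2 := mul_nonneg hh0.le hq.2.1
    have h3 : u q ≤ G := huq q hq
    simp only [hψdef]
    linarith
  -- p is a global maximum on D
  have hmaxD : IsMaxOn ψ D p := by
    intro q hq
    by_cases hqK : q ∈ K
    · exact hpmax q hqK
    · have h1 := hfar q hq hqK
      have : ψ q ≤ ψ p := by linarith
      exact this
  -- the maximum is attained at a positive time
  have hpt : 0 < p.2 := by
    by_contra hc
    push_neg at hc
    have hz : p.2 = 0 := le_antisymm hc hpK.2.1
    have hup : u p ≤ S0 := by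
      have : u p = u (p.1, 0) := by rw [← hz]
      rw [this]; exact hslice0 p.1
    have h1 : ψ p ≤ u p := hψle p (hKD hpK)
    linarith
  exact ⟨p, ⟨hpt, hpK.2.2⟩, hmaxD⟩
end
end

section
/- Let D ⊆ ℝ^{d+1} be open, u, v : cl(D) → ℝ continuous, harmonic in D, bounded, with u ≤ v on ∂D. Suppose moreover D = D_f is the subgraph of a bounded continuous function f (weak maximum principle hypothesis). Then u ≤ v on all of D_f. -/
noncomputable section

/-- The Laplacian of a function on `ℝ^d × ℝ`, computed coordinate-wise via `fderiv`. -/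
def laplacian {d : ℕ} (u : EuclideanSpace ℝ (Fin d) × ℝ → ℝ)
    (p : EuclideanSpace ℝ (Fin d) × ℝ) : ℝ :=
  (∑ i : Fin d,
    fderiv ℝ (fun q => fderiv ℝ u q (EuclideanSpace.single i 1, (0 : ℝ))) p
      (EuclideanSpace.single i 1, (0 : ℝ)))
  + fderiv ℝ (fun q => fderiv ℝ u q ((0 : EuclideanSpace ℝ (Fin d)), (1 : ℝ))) p
      ((0 : EuclideanSpace ℝ (Fin d)), (1 : ℝ))

section OneD

/-- 1-d second derivative test: at a local max where φ is differentiable nearby and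
deriv φ has derivative c at 0, we must have c ≤ 0. -/
lemma second_deriv_test {φ : ℝ → ℝ} {c : ℝ}
    (hmax : IsLocalMax φ 0)
    (hdiff : ∀ᶠ t in nhds (0:ℝ), DifferentiableAt ℝ φ t)
    (hd2 : HasDerivAt (deriv φ) c 0) : c ≤ 0 := by
  by_contra hc
  push_neg at hc
  have h0 : deriv φ 0 = 0 := hmax.deriv_eq_zero
  -- slope of deriv φ tends to c > 0, hence deriv φ t > 0 for small t > 0
  have hslope := hasDerivAt_iff_tendsto_slope.1 hd2
  have hpos : ∀ᶠ t in nhdsWithin (0:ℝ) (Set.Ioi 0), 0 < deriv φ t := by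
    have h1 : Filter.Tendsto (slope (deriv φ) 0) (nhdsWithin 0 (Set.Ioi 0)) (nhds c) :=
      hslope.mono_left (nhdsWithin_mono _ (by intro x hx; simpa using ne_of_gt hx))
    have h2 : ∀ᶠ t in nhdsWithin (0:ℝ) (Set.Ioi 0), 0 < slope (deriv φ) 0 t :=
      h1.eventually (eventually_gt_nhds hc)
    filter_upwards [h2, self_mem_nhdsWithin] with t ht ht'
    have ht0 : (0:ℝ) < t := ht'
    have : slope (deriv φ) 0 t = t⁻¹ * deriv φ t := by
      simp [slope, h0]
    rw [this] at ht
    nlinarith [inv_pos.2 ht0]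
  -- get an interval (0, δ) where deriv φ > 0, φ differentiable on [0,δ], φ ≤ φ 0
  rcases (nhdsGT_basis (0:ℝ)).eventually_iff.1 hpos with ⟨b, hb, hbsub⟩
  rcases Metric.eventually_nhds_iff.1 (hdiff.and hmax) with ⟨r, hr, hrsub⟩
  set δ := min (b/2) (r/2) with hδ
  have hδpos : 0 < δ := lt_min (by linarith) (by linarith)
  have hmem : ∀ t ∈ Set.Icc (0:ℝ) δ, DifferentiableAt ℝ φ t ∧ φ t ≤ φ 0 := by
    intro t ht
    apply hrsub
    rw [Real.dist_eq, sub_zero, abs_of_nonneg ht.1]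
    calc t ≤ δ := ht.2
    _ ≤ r/2 := min_le_right _ _
    _ < r := by linarith
  have hmono : StrictMonoOn φ (Set.Icc 0 δ) := by
    apply strictMonoOn_of_deriv_pos (convex_Icc _ _)
    · exact fun t ht => ((hmem t ht).1).continuousAt.continuousWithinAt
    · intro t ht
      rw [interior_Icc] at ht
      exact hbsub ⟨ht.1, lt_of_lt_of_le ht.2 (le_trans (min_le_left _ _) (by linarith))⟩
  have : φ 0 < φ δ := hmono ⟨le_refl 0, le_of_lt hδpos⟩ ⟨le_of_lt hδpos, le_refl δ⟩ hδpos
  have := (hmem δ ⟨le_of_lt hδpos, le_refl δ⟩).2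
  linarith

end OneD

section Dir
variable {E : Type*} [NormedAddCommGroup E] [NormedSpace ℝ E]
lemma second_dir_deriv_nonpos {g : E → ℝ} {p : E}
    (hg : ContDiffAt ℝ 2 g p) (hmax : IsLocalMax g p) (e : E) :
    fderiv ℝ (fun q => fderiv ℝ g q e) p e ≤ 0 := by
  set ℓ : ℝ → E := fun t => p + t • e with hℓ
  have hℓ0 : ℓ 0 = p := by simp [hℓ]
  have hℓd : ∀ t : ℝ, HasDerivAt ℓ e t := by
    intro t
    have := ((hasDerivAt_id t).smul_const e).const_add p
    rw [one_smul] at this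
    exact this
  have hℓc : Filter.Tendsto ℓ (nhds 0) (nhds p) := by
    rw [← hℓ0]; exact (hℓd 0).continuousAt
  -- g is differentiable near p
  have hev : ∀ᶠ q in nhds p, DifferentiableAt ℝ g q := by
    have := hg.eventually (by norm_num)
    filter_upwards [this] with q hq
    exact hq.differentiableAt (by norm_num)
  set φ : ℝ → ℝ := fun t => g (ℓ t) with hφ
  have hmaxφ : IsLocalMax φ 0 := by
    have := hℓc.eventually hmax
    filter_upwards [this] with t ht
    simpa [hφ, hℓ0] using ht
  have hder : ∀ᶠ t in nhds (0:ℝ), HasDerivAt φ (fderiv ℝ g (ℓ t) e) t := by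
    filter_upwards [hℓc.eventually hev] with t ht
    exact (ht.hasFDerivAt).comp_hasDerivAt t (hℓd t)
  have hdiffφ : ∀ᶠ t in nhds (0:ℝ), DifferentiableAt ℝ φ t := by
    filter_upwards [hder] with t ht; exact ht.differentiableAt
  have hderiv_eq : (fun t => fderiv ℝ g (ℓ t) e) =ᶠ[nhds (0:ℝ)] deriv φ := by
    filter_upwards [hder] with t ht; exact ht.deriv.symm
  -- second derivative
  have hdf : DifferentiableAt ℝ (fderiv ℝ g) p :=
    (hg.fderiv_right (m := 1) (by norm_num)).differentiableAt (by norm_num)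
  have hD1 : HasFDerivAt (fun q => fderiv ℝ g q e)
      ((ContinuousLinearMap.apply ℝ ℝ e).comp (fderiv ℝ (fderiv ℝ g) p)) p :=
    ((ContinuousLinearMap.apply ℝ ℝ e).hasFDerivAt).comp p hdf.hasFDerivAt
  set c : ℝ := ((ContinuousLinearMap.apply ℝ ℝ e).comp (fderiv ℝ (fderiv ℝ g) p)) e with hc
  have hψ : HasDerivAt (fun t => fderiv ℝ g (ℓ t) e) c 0 := by
    have hD1' : HasFDerivAt (fun q => fderiv ℝ g q e)
        ((ContinuousLinearMap.apply ℝ ℝ e).comp (fderiv ℝ (fderiv ℝ g) p)) (ℓ 0) := by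
      rw [hℓ0]; exact hD1
    exact hD1'.comp_hasDerivAt 0 (hℓd 0)
  have hd2 : HasDerivAt (deriv φ) c 0 := hψ.congr_of_eventuallyEq hderiv_eq.symm
  have hle : c ≤ 0 := second_deriv_test hmaxφ hdiffφ hd2
  rwa [hD1.fderiv]

end Dir

variable {d : ℕ}

abbrev Ed (d : ℕ) := EuclideanSpace ℝ (Fin d) × ℝ

/-- helper to compute a pure second directional derivative -/
lemma second_dir_eq {g g1 : Ed d → ℝ} {G : Ed d → (Ed d →L[ℝ] ℝ)} {L : Ed d →L[ℝ] ℝ}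
    {p e : Ed d}
    (h1 : ∀ q, HasFDerivAt g (G q) q) (heval : ∀ q, G q e = g1 q)
    (h2 : HasFDerivAt g1 L p) :
    fderiv ℝ (fun q => fderiv ℝ g q e) p e = L e := by
  have : (fun q => fderiv ℝ g q e) = g1 := funext fun q => by rw [(h1 q).fderiv, heval]
  rw [this, h2.fderiv]

def sndL : Ed d →L[ℝ] ℝ := ContinuousLinearMap.snd ℝ _ _
def projL (i : Fin d) : Ed d →L[ℝ] ℝ :=
  (EuclideanSpace.proj i).comp (ContinuousLinearMap.fst ℝ _ _)

lemma laplacian_snd : ∀ p : Ed d, laplacian (fun q => q.2) p = 0 := by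
  intro p
  unfold laplacian
  have h1 : ∀ q : Ed d, HasFDerivAt (fun q : Ed d => q.2) (sndL (d := d)) q :=
    fun q => hasFDerivAt_snd
  rw [Finset.sum_congr rfl (fun i _ => second_dir_eq h1
      (g1 := fun _ => (0:ℝ)) (fun q => by simp [sndL]) (hasFDerivAt_const 0 p)),
    second_dir_eq h1 (g1 := fun _ => (1:ℝ)) (fun q => by simp [sndL]) (hasFDerivAt_const 1 p)]
  simp

lemma laplacian_sndsq : ∀ p : Ed d, laplacian (fun q => q.2 ^ 2) p = 2 := by
  intro p
  unfold laplacian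
  have h1 : ∀ q : Ed d, HasFDerivAt (fun q : Ed d => q.2 ^ 2)
      ((2 * q.2) • sndL (d := d)) q := by
    intro q
    have := (hasFDerivAt_snd (𝕜 := ℝ) (p := q)).mul (hasFDerivAt_snd (𝕜 := ℝ) (p := q))
    refine (this.congr_of_eventuallyEq (Filter.Eventually.of_forall fun r => ?_)).congr_fderiv ?_
    · show r.2 ^ 2 = r.2 * r.2; ring
    · ext w <;> simp [sndL] <;> ring
  rw [Finset.sum_congr rfl (fun i _ => second_dir_eq h1
      (g1 := fun _ => (0:ℝ)) (fun q => by simp [sndL]) (hasFDerivAt_const 0 p)),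
    second_dir_eq h1 (g1 := fun q => 2 * q.2)
      (fun q => by simp [sndL])
      (by simpa using (hasFDerivAt_snd (𝕜 := ℝ) (p := p)).const_mul (2:ℝ))]
  simp [sndL]

lemma laplacian_sumsq : ∀ p : Ed d, laplacian (fun q => ∑ i, (q.1 i) ^ 2) p = 2 * d := by
  intro p
  unfold laplacian
  have h1 : ∀ q : Ed d, HasFDerivAt (fun q : Ed d => ∑ i, (q.1 i) ^ 2)
      (∑ i, (2 * q.1 i) • projL i) q := by
    intro q
    have : ∀ i : Fin d, HasFDerivAt (fun q : Ed d => (q.1 i) ^ 2)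
        ((2 * q.1 i) • projL i) q := by
      intro i
      have hp : HasFDerivAt (fun q : Ed d => q.1 i) (projL (d := d) i) q :=
        (projL i).hasFDerivAt
      have := hp.mul hp
      refine (this.congr_of_eventuallyEq (Filter.Eventually.of_forall fun r => ?_)).congr_fderiv ?_
      · show (r.1 i) ^ 2 = r.1 i * r.1 i; ring
      · ext w <;> simp [projL] <;> ring
    exact HasFDerivAt.fun_sum (fun i _ => this i)
  have heval1 : ∀ j : Fin d, ∀ q : Ed d,
      (∑ i, (2 * q.1 i) • projL i) (EuclideanSpace.single j 1, (0:ℝ)) = 2 * q.1 j := by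
    intro j q
    simp only [ContinuousLinearMap.sum_apply, ContinuousLinearMap.smul_apply, projL,
      ContinuousLinearMap.coe_comp', Function.comp_apply, ContinuousLinearMap.coe_fst',
      PiLp.proj_apply, smul_eq_mul]
    rw [Finset.sum_eq_single j]
    · simp
    · intro i _ hij; simp [EuclideanSpace.single_apply, hij]
    · simp
  rw [Finset.sum_congr rfl (fun j _ => second_dir_eq h1 (g1 := fun q => 2 * q.1 j)
      (heval1 j)
      (by exact ((projL (d := d) j).hasFDerivAt (x := p)).const_mul (2:ℝ))),
    second_dir_eq h1 (g1 := fun _ => (0:ℝ))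
      (fun q => by simp [projL]) (hasFDerivAt_const 0 p)]
  simp [projL, EuclideanSpace.single_apply]
  ring

lemma hasFDerivAt_D1 {g : Ed d → ℝ} {p : Ed d} (hg : ContDiffAt ℝ 2 g p) (e : Ed d) :
    HasFDerivAt (fun q => fderiv ℝ g q e)
      ((ContinuousLinearMap.apply ℝ ℝ e).comp (fderiv ℝ (fderiv ℝ g) p)) p := by
  have hdf : DifferentiableAt ℝ (fderiv ℝ g) p :=
    (hg.fderiv_right (m := 1) (by norm_num)).differentiableAt (by norm_num)
  exact ((ContinuousLinearMap.apply ℝ ℝ e).hasFDerivAt).comp p hdf.hasFDerivAt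

lemma second_dir_combo {g h : Ed d → ℝ} {U : Set (Ed d)} (hU : IsOpen U) {p : Ed d}
    (hp : p ∈ U) (hg : ContDiffOn ℝ 2 g U) (hh : ContDiffOn ℝ 2 h U) (a b : ℝ) (e : Ed d) :
    fderiv ℝ (fun q => fderiv ℝ (fun x => a * g x + b * h x) q e) p e
      = a * fderiv ℝ (fun q => fderiv ℝ g q e) p e
        + b * fderiv ℝ (fun q => fderiv ℝ h q e) p e := by
  have hgc : ∀ q ∈ U, ContDiffAt ℝ 2 g q := fun q hq => hg.contDiffAt (hU.mem_nhds hq)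
  have hhc : ∀ q ∈ U, ContDiffAt ℝ 2 h q := fun q hq => hh.contDiffAt (hU.mem_nhds hq)
  have heq : (fun q => fderiv ℝ (fun x => a * g x + b * h x) q e)
      =ᶠ[nhds p] (fun q => a * fderiv ℝ g q e + b * fderiv ℝ h q e) := by
    filter_upwards [hU.mem_nhds hp] with q hq
    have hgd : DifferentiableAt ℝ g q := (hgc q hq).differentiableAt (by norm_num)
    have hhd : DifferentiableAt ℝ h q := (hhc q hq).differentiableAt (by norm_num)
    rw [fderiv_fun_add ((hgd.const_mul a)) ((hhd.const_mul b)), fderiv_const_mul hgd,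
      fderiv_const_mul hhd]
    simp
  rw [heq.fderiv_eq]
  have h1 := hasFDerivAt_D1 (hgc p hp) e
  have h2 := hasFDerivAt_D1 (hhc p hp) e
  have := ((h1.const_mul a).fun_add (h2.const_mul b)).fderiv
  rw [this, h1.fderiv, h2.fderiv]
  simp

lemma laplacian_combo {g h : Ed d → ℝ} {U : Set (Ed d)} (hU : IsOpen U) {p : Ed d}
    (hp : p ∈ U) (hg : ContDiffOn ℝ 2 g U) (hh : ContDiffOn ℝ 2 h U) (a b : ℝ) :
    laplacian (fun x => a * g x + b * h x) p = a * laplacian g p + b * laplacian h p := by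
  unfold laplacian
  rw [Finset.sum_congr rfl (fun i _ => second_dir_combo hU hp hg hh a b _),
    second_dir_combo hU hp hg hh a b _, Finset.sum_add_distrib, ← Finset.mul_sum,
    ← Finset.mul_sum]
  ring

lemma laplacian_nonpos_of_isLocalMax {g : Ed d → ℝ} {p : Ed d}
    (hg : ContDiffAt ℝ 2 g p) (hmax : IsLocalMax g p) : laplacian g p ≤ 0 := by
  unfold laplacian
  have h := fun e : Ed d => second_dir_deriv_nonpos hg hmax e
  exact add_nonpos (Finset.sum_nonpos fun i _ => h _) (h _)

lemma weak_max_principle {U : Set (Ed d)} (hUo : IsOpen U) (hUb : Bornology.IsBounded U)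
    {g : Ed d → ℝ} (hgc : ContinuousOn g (closure U)) (hg2 : ContDiffOn ℝ 2 g U)
    (hsub : ∀ p ∈ U, 0 ≤ laplacian g p) (hbd : ∀ p ∈ frontier U, g p ≤ 0) :
    ∀ p ∈ U, g p ≤ 0 := by
  intro p hp
  -- a bound for q.2^2 on closure U
  obtain ⟨r, hr⟩ := hUb.subset_closedBall 0
  set C : ℝ := (max r 0) ^ 2 with hCdef
  have hC0 : 0 ≤ C := sq_nonneg _
  have hC : ∀ q ∈ closure U, q.2 ^ 2 ≤ C := by
    intro q hq
    have h1 : q ∈ Metric.closedBall 0 (max r 0) :=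
      closure_minimal (hr.trans (Metric.closedBall_subset_closedBall (le_max_left _ _)))
        Metric.isClosed_closedBall hq
    rw [Metric.mem_closedBall, dist_zero_right] at h1
    have h2 : ‖q.2‖ ≤ max r 0 := (norm_snd_le q).trans h1
    rw [Real.norm_eq_abs] at h2
    nlinarith [abs_nonneg q.2, sq_abs q.2]
  -- main estimate for each σ > 0
  have key : ∀ σ : ℝ, 0 < σ → g p ≤ σ * C := by
    intro σ hσ
    set gσ : Ed d → ℝ := fun q => 1 * g q + σ * q.2 ^ 2 with hgσdef
    have hsq : ContDiff ℝ 2 (fun q : Ed d => q.2 ^ 2) := contDiff_snd.pow 2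
    have hgσc : ContinuousOn gσ (closure U) :=
      ((continuousOn_const.mul hgc).add
        (continuousOn_const.mul (hsq.continuous.continuousOn)))
    have hcomp : IsCompact (closure U) := hUb.isCompact_closure
    have hne : (closure U).Nonempty := ⟨p, subset_closure hp⟩
    obtain ⟨z, hz, hzmax⟩ := hcomp.exists_isMaxOn hne hgσc
    have hzU : z ∉ U := by
      intro hzU
      have hloc : IsLocalMax gσ z := by
        filter_upwards [hUo.mem_nhds hzU] with q hq
        exact hzmax (subset_closure hq)
      have hat : ContDiffAt ℝ 2 gσ z :=
        (contDiffAt_const.mul (hg2.contDiffAt (hUo.mem_nhds hzU))).add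
          (contDiffAt_const.mul hsq.contDiffAt)
      have h1 : laplacian gσ z ≤ 0 := laplacian_nonpos_of_isLocalMax hat hloc
      have h2 : laplacian gσ z = 1 * laplacian g z + σ * laplacian (fun q => q.2 ^ 2) z :=
        laplacian_combo hUo hzU hg2 (hsq.contDiffOn) 1 σ
      rw [h2, laplacian_sndsq z] at h1
      have := hsub z hzU
      nlinarith
    have hzfr : z ∈ frontier U := by
      rw [frontier, hUo.interior_eq]
      exact ⟨hz, hzU⟩
    have h3 : gσ p ≤ gσ z := hzmax (subset_closure hp)
    have h4 : g z ≤ 0 := hbd z hzfr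
    have h5 : z.2 ^ 2 ≤ C := hC z hz
    have h6 : 0 ≤ p.2 ^ 2 := sq_nonneg _
    simp only [hgσdef, one_mul] at h3
    nlinarith
  by_contra hcon
  push_neg at hcon
  have := key (g p / (2 * (C + 1))) (by positivity)
  rw [div_mul_eq_mul_div, le_div_iff₀ (by positivity)] at this
  nlinarith [hcon]

lemma laplacian_const (c : ℝ) (p : Ed d) : laplacian (d := d) (fun _ => c) p = 0 := by
  unfold laplacian
  have h1 : ∀ q : Ed d, HasFDerivAt (fun _ : Ed d => c) (0 : Ed d →L[ℝ] ℝ) q :=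
    fun q => hasFDerivAt_const c q
  rw [Finset.sum_congr rfl (fun i _ => second_dir_eq h1
      (g1 := fun _ => (0:ℝ)) (fun q => by simp) (hasFDerivAt_const 0 p)),
    second_dir_eq h1 (g1 := fun _ => (0:ℝ)) (fun q => by simp) (hasFDerivAt_const 0 p)]
  simp

lemma le_on_closure' {g : Ed d → ℝ} {s : Set (Ed d)} {M : ℝ}
    (hg : ContinuousOn g (closure s)) (h : ∀ x ∈ s, g x ≤ M) :
    ∀ x ∈ closure s, g x ≤ M := by
  intro x hx
  haveI : (nhdsWithin x s).NeBot := mem_closure_iff_nhdsWithin_neBot.1 hx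
  have ht : Filter.Tendsto g (nhdsWithin x s) (nhds (g x)) :=
    ((hg x hx).mono subset_closure).tendsto
  exact le_of_tendsto ht (eventually_nhdsWithin_of_forall h)


set_option maxHeartbeats 1000000 in
/-- Comparison principle for bounded harmonic functions on the subgraph of a bounded
continuous function: if `u ≤ v` on the boundary, then `u ≤ v` throughout. -/
theorem stmt_7 {d : ℕ} (f : EuclideanSpace ℝ (Fin d) → ℝ)
    (hf : Continuous f) (K : ℝ) (hfb : ∀ x, |f x| ≤ K)
    (u v : EuclideanSpace ℝ (Fin d) × ℝ → ℝ)
    (D : Set (EuclideanSpace ℝ (Fin d) × ℝ))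
    (hD : D = {p : EuclideanSpace ℝ (Fin d) × ℝ | p.2 < f p.1})
    (hu : ContinuousOn u (closure D)) (hv : ContinuousOn v (closure D))
    (huc : ContDiffOn ℝ 2 u D) (hvc : ContDiffOn ℝ 2 v D)
    (huh : ∀ p ∈ D, laplacian u p = 0) (hvh : ∀ p ∈ D, laplacian v p = 0)
    (Mu Mv : ℝ) (hub : ∀ p ∈ D, |u p| ≤ Mu) (hvb : ∀ p ∈ D, |v p| ≤ Mv)
    (hbd : ∀ p ∈ frontier D, u p ≤ v p) :
    ∀ p ∈ D, u p ≤ v p := by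
  -- basic facts about D
  have hDo : IsOpen D := by
    rw [hD]; exact isOpen_lt continuous_snd (hf.comp continuous_fst)
  have hDcl : ∀ q ∈ closure D, q.2 ≤ f q.1 := by
    have : closure D ⊆ {p : Ed d | p.2 ≤ f p.1} := by
      apply closure_minimal
      · rw [hD]; exact fun p hp => show p.2 ≤ f p.1 from le_of_lt hp
      · exact isClosed_le continuous_snd (hf.comp continuous_fst)
    exact fun q hq => this hq
  have hK0 : 0 ≤ K := le_trans (abs_nonneg _) (hfb 0)
  have hfK : ∀ x, f x ≤ K := fun x => le_trans (le_abs_self _) (hfb x)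
  have hclK : ∀ q ∈ closure D, q.2 ≤ K := fun q hq => le_trans (hDcl q hq) (hfK q.1)
  -- the sum of squares function
  set S : Ed d → ℝ := fun q => ∑ i, (q.1 i) ^ 2 with hSdef
  have hS0 : ∀ q : Ed d, 0 ≤ S q := fun q => Finset.sum_nonneg fun i _ => sq_nonneg _
  have hScd : ContDiff ℝ 2 S :=
    ContDiff.sum fun i _ => (((EuclideanSpace.proj (𝕜 := ℝ) i).contDiff).comp contDiff_fst).pow 2
  intro p₀ hp₀
  have hp₀2 : p₀.2 < f p₀.1 := by rw [hD] at hp₀; exact hp₀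
  set M : ℝ := Mu + Mv with hM
  have hM0 : 0 ≤ M := by
    have h1 := hub p₀ hp₀; have h2 := hvb p₀ hp₀
    have := abs_nonneg (u p₀); have := abs_nonneg (v p₀); linarith
  have hwD : ∀ q ∈ D, u q - v q ≤ M := by
    intro q hq
    have h1 := hub q hq; have h2 := hvb q hq
    have h3 := le_abs_self (u q); have h4 := neg_abs_le (v q)
    linarith
  have hwcl : ∀ q ∈ closure D, u q - v q ≤ M := le_on_closure' (hu.sub hv) hwD
  -- reduce to: ∀ ε > 0, u p₀ - v p₀ ≤ ε * (K + 1 - p₀.2)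
  have hcpos : 0 < K + 1 - p₀.2 := by
    have := hfK p₀.1; linarith
  suffices hkey : ∀ ε : ℝ, 0 < ε → u p₀ - v p₀ ≤ ε * (K + 1 - p₀.2) by
    by_contra hcon
    push_neg at hcon
    have hw0 : 0 < u p₀ - v p₀ := by linarith
    have := hkey ((u p₀ - v p₀) / (2 * (K + 1 - p₀.2))) (by positivity)
    rw [div_mul_eq_mul_div, le_div_iff₀ (by positivity)] at this
    nlinarith
  intro ε hε
  -- choose N
  set N : ℝ := max (max (M / ε) (1 - p₀.2)) (K + 1) with hNdef
  have hNM : M ≤ ε * N := by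
    have h1 : M / ε ≤ N := le_trans (le_max_left _ _) (le_max_left _ _)
    calc M = ε * (M / ε) := by field_simp
    _ ≤ ε * N := by nlinarith
  have hNp₀ : -N < p₀.2 := by
    have h1 : 1 - p₀.2 ≤ N := le_trans (le_max_right _ _) (le_max_left _ _)
    linarith
  have hNK : K + 1 ≤ N := le_max_right _ _
  have hN0 : 0 < N := by linarith
  have hsl : ∀ t : ℝ, -N ≤ t → t ≤ K → t ^ 2 ≤ N ^ 2 :=
    fun t h1 h2 => sq_le_sq' h1 (by linarith)
  -- reduce to: ∀ η > 0, ...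
  suffices hkey2 : ∀ η : ℝ, 0 < η →
      u p₀ - v p₀ ≤ ε * (K + 1 - p₀.2) + η * (S p₀ + ↑d * N ^ 2 + 1) by
    apply le_of_forall_pos_le_add
    intro δ hδ
    have hc2 : 0 < S p₀ + ↑d * N ^ 2 + 1 := by
      have := hS0 p₀
      have : (0:ℝ) ≤ ↑d * N ^ 2 := by positivity
      have := hS0 p₀
      linarith
    have := hkey2 (δ / (S p₀ + ↑d * N ^ 2 + 1)) (by positivity)
    calc u p₀ - v p₀ ≤ ε * (K + 1 - p₀.2)
        + (δ / (S p₀ + ↑d * N ^ 2 + 1)) * (S p₀ + ↑d * N ^ 2 + 1) := this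
    _ = ε * (K + 1 - p₀.2) + δ := by field_simp
  intro η hη
  -- choose A
  set A : ℝ := max (S p₀ + 1) (M / η) with hAdef
  have hAp₀ : S p₀ < A := lt_of_lt_of_le (by linarith) (le_max_left _ _)
  have hAM : M ≤ η * A := by
    have h1 : M / η ≤ A := le_max_right _ _
    calc M = η * (M / η) := by field_simp
    _ ≤ η * A := by nlinarith
  -- the auxiliary functions
  set c₀ : ℝ := -(ε * (K + 1)) - η * ↑d * N ^ 2 with hc₀def
  set χ : Ed d → ℝ := fun x => c₀ * (fun _ : Ed d => (1:ℝ)) x + ε * (fun q : Ed d => q.2) x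
    with hχdef
  set ψ : Ed d → ℝ := fun x => 1 * χ x + (η * ↑d) * (fun q : Ed d => q.2 ^ 2) x with hψdef
  set φ : Ed d → ℝ := fun x => 1 * ψ x + (-η) * S x with hφdef
  set w : Ed d → ℝ := fun x => 1 * u x + (-1) * v x with hwdef
  set G : Ed d → ℝ := fun x => 1 * w x + 1 * φ x with hGdef
  have hGval : ∀ q : Ed d, G q = (u q - v q) - ε * (K + 1 - q.2)
      - η * (S q - ↑d * q.2 ^ 2 + ↑d * N ^ 2) := by
    intro q
    simp only [hGdef, hwdef, hφdef, hψdef, hχdef, hc₀def]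
    ring
  -- smoothness
  have hχcd : ContDiff ℝ 2 χ := (contDiff_const.mul contDiff_const).add
    (contDiff_const.mul contDiff_snd)
  have hψcd : ContDiff ℝ 2 ψ := (contDiff_const.mul hχcd).add
    (contDiff_const.mul (contDiff_snd.pow 2))
  have hφcd : ContDiff ℝ 2 φ := (contDiff_const.mul hψcd).add (contDiff_const.mul hScd)
  have hwcd : ContDiffOn ℝ 2 w D := (contDiffOn_const.mul huc).add (contDiffOn_const.mul hvc)
  -- the bounded domain
  set V : Set (Ed d) := D ∩ ({q : Ed d | -N < q.2} ∩ {q : Ed d | S q < A}) with hVdef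
  have hVo : IsOpen V := hDo.inter ((isOpen_lt continuous_const continuous_snd).inter
    (isOpen_lt hScd.continuous continuous_const))
  have hVD : V ⊆ D := Set.inter_subset_left
  have hp₀V : p₀ ∈ V := ⟨hp₀, hNp₀, hAp₀⟩
  have hclVD : closure V ⊆ closure D := closure_mono hVD
  have hclVN : ∀ q ∈ closure V, -N ≤ q.2 := by
    have : closure V ⊆ {q : Ed d | -N ≤ q.2} := closure_minimal
      (fun q hq => show -N ≤ q.2 from le_of_lt hq.2.1)
      (isClosed_le continuous_const continuous_snd)
    exact fun q hq => this hq
  have hclVA : ∀ q ∈ closure V, S q ≤ A := by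
    have : closure V ⊆ {q : Ed d | S q ≤ A} := closure_minimal
      (fun q hq => show S q ≤ A from le_of_lt hq.2.2)
      (isClosed_le hScd.continuous continuous_const)
    exact fun q hq => this hq
  have hVb : Bornology.IsBounded V := by
    apply (Metric.isBounded_closedBall (x := (0 : Ed d)) (r := max (Real.sqrt A) N)).subset
    intro q hq
    obtain ⟨hqD', hqr⟩ := hq
    have hqN' : -N < q.2 := hqr.1
    have hqA' : S q < A := hqr.2
    have hq2K' : q.2 ≤ K := hclK q (subset_closure hqD')
    rw [Metric.mem_closedBall, dist_zero_right, Prod.norm_def]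
    apply max_le
    · apply le_trans _ (le_max_left _ _)
      rw [EuclideanSpace.norm_eq]
      apply Real.sqrt_le_sqrt
      have h5 : ∑ i, ‖q.1 i‖ ^ 2 = S q := by
        simp [hSdef, sq_abs]
      rw [h5]
      exact le_of_lt hqA'
    · apply le_trans _ (le_max_right _ _)
      rw [Real.norm_eq_abs, abs_le]
      exact ⟨by linarith, by linarith⟩
  -- continuity of G on closure V
  have hGc : ContinuousOn G (closure V) := by
    apply ContinuousOn.add
    · apply ContinuousOn.mul continuousOn_const
      exact (continuousOn_const.mul (hu.mono hclVD)).add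
        (continuousOn_const.mul (hv.mono hclVD))
    · exact continuousOn_const.mul (hφcd.continuous.continuousOn)
  have hG2 : ContDiffOn ℝ 2 G V := by
    apply ContDiffOn.add
    · exact contDiffOn_const.mul (hwcd.mono hVD)
    · exact contDiffOn_const.mul hφcd.contDiffOn
  -- subharmonicity (in fact harmonicity)
  have hGsub : ∀ q ∈ V, 0 ≤ laplacian G q := by
    intro q hq
    have hqD : q ∈ D := hVD hq
    have lapw : laplacian w q = 0 := by
      rw [hwdef, laplacian_combo hDo hqD huc hvc 1 (-1), huh q hqD, hvh q hqD]; ring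
    have lapχ : laplacian χ q = 0 := by
      rw [hχdef, laplacian_combo isOpen_univ (Set.mem_univ q) contDiff_const.contDiffOn
        contDiff_snd.contDiffOn c₀ ε, laplacian_const, laplacian_snd]
      ring
    have lapψ : laplacian ψ q = η * ↑d * 2 := by
      rw [hψdef, laplacian_combo isOpen_univ (Set.mem_univ q) hχcd.contDiffOn
        (contDiff_snd.pow 2).contDiffOn 1 (η * ↑d), lapχ, laplacian_sndsq]
      ring
    have lapφ : laplacian φ q = 0 := by
      rw [hφdef, laplacian_combo isOpen_univ (Set.mem_univ q) hψcd.contDiffOn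
        hScd.contDiffOn 1 (-η), lapψ, laplacian_sumsq]
      ring
    have lapG : laplacian G q = 0 := by
      rw [hGdef, laplacian_combo hDo hqD hwcd hφcd.contDiffOn 1 1, lapw, lapφ]
      ring
    rw [lapG]
  -- boundary estimate
  have hGbd : ∀ q ∈ frontier V, G q ≤ 0 := by
    intro q hq
    rw [hVo.frontier_eq] at hq
    obtain ⟨hqcl, hqV⟩ := hq
    have hqclD : q ∈ closure D := hclVD hqcl
    have hq2K : q.2 ≤ K := hclK q hqclD
    have hqN : -N ≤ q.2 := hclVN q hqcl
    have hqA : S q ≤ A := hclVA q hqcl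
    have hqsq : q.2 ^ 2 ≤ N ^ 2 := hsl q.2 hqN hq2K
    have hwM : u q - v q ≤ M := hwcl q hqclD
    have hdN : (0:ℝ) ≤ ↑d * N ^ 2 - ↑d * q.2 ^ 2 := by
      have : (0:ℝ) ≤ (d:ℝ) := Nat.cast_nonneg d
      nlinarith
    rw [hGval]
    have hS0q := hS0 q
    have hp1 : 0 ≤ η * (↑d * N ^ 2 - ↑d * q.2 ^ 2) := mul_nonneg (le_of_lt hη) hdN
    have hp2 : 0 ≤ η * S q := mul_nonneg (le_of_lt hη) hS0q
    have hp3 : ε * q.2 ≤ ε * K := mul_le_mul_of_nonneg_left hq2K (le_of_lt hε)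
    have hp4 : 0 ≤ ε * N := mul_nonneg (le_of_lt hε) (le_of_lt hN0)
    have hp5 : 0 ≤ ε * (K + 1) := mul_nonneg (le_of_lt hε) (by linarith)
    -- three cases
    by_cases hqD : q ∈ D
    · by_cases hqN2 : -N < q.2
      · have hqA2 : S q = A := by
          by_contra hne
          exact hqV ⟨hqD, hqN2, lt_of_le_of_ne hqA hne⟩
        -- side boundary : S q = A
        rw [hqA2]
        rw [hqA2] at hp2
        nlinarith
      · -- bottom boundary : q.2 = -N
        have hqN3 : q.2 = -N := le_antisymm (not_lt.1 hqN2) hqN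
        rw [hqN3]
        rw [hqN3] at hqsq hp1 hp3
        nlinarith
    · -- graph boundary
      have hqfr : q ∈ frontier D := by
        rw [frontier, hDo.interior_eq]
        exact ⟨hqclD, hqD⟩
      have hwq : u q - v q ≤ 0 := by have := hbd q hqfr; linarith
      nlinarith
  -- apply the weak maximum principle
  have := weak_max_principle hVo hVb hGc hG2 hGsub hGbd p₀ hp₀V
  rw [hGval] at this
  have hd0 : (0:ℝ) ≤ (d:ℝ) := Nat.cast_nonneg d
  have hq1 : 0 ≤ η * (1 + ↑d * p₀.2 ^ 2) := mul_nonneg (le_of_lt hη) (by positivity)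
  nlinarith [hS0 p₀]
end
end

section
/- Let {u_i}_{i ∈ I} be a family of functions ℝ^d × (0,T) → ℝ, uniformly bounded above, each upper semicontinuous, and let u = sup_i u_i with u* its upper semicontinuous envelope. If φ is a function such that u* − φ has a strict maximum 0 at (x₀, t₀) over a compact set K ⊆ ℝ^d × (0,T) containing (x₀,t₀) in its interior, then there exist indices iₙ, points (yₙ, sₙ) ∈ K, and constants cₙ → 0, such that u_{iₙ} − (φ + cₙ) has a local maximum at (yₙ, sₙ), u_{iₙ}(yₙ, sₙ) → u*(x₀,t₀), and (yₙ, sₙ) → (x₀, t₀). -/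
noncomputable section

open Filter

/-- An upper semicontinuous function bounded above on a nonempty compact set attains
its maximum there. -/
lemma usc_exists_isMaxOn {X : Type*} [MetricSpace X] {K : Set X} (hK : IsCompact K)
    (hne : K.Nonempty) {f : X → ℝ} (hf : UpperSemicontinuousOn f K)
    {m : ℝ} (hm : ∀ x ∈ K, f x ≤ m) :
    ∃ a ∈ K, ∀ x ∈ K, f x ≤ f a := by
  set M := sSup (f '' K) with hM
  have hbdd : BddAbove (f '' K) := ⟨m, by rintro _ ⟨x, hx, rfl⟩; exact hm x hx⟩
  have hne' : (f '' K).Nonempty := hne.image f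
  have hseq : ∀ n : ℕ, ∃ x, x ∈ K ∧ M - 1 / (n + 1) < f x := by
    intro n
    have h1 : M - 1 / ((n : ℝ) + 1) < M := by
      have : (0 : ℝ) < 1 / ((n : ℝ) + 1) := by positivity
      linarith
    obtain ⟨_, ⟨x, hx, rfl⟩, hlt⟩ := exists_lt_of_lt_csSup hne' h1
    exact ⟨x, hx, hlt⟩
  choose x hxK hxf using hseq
  obtain ⟨a, haK, ψ, hψ, hconv⟩ := hK.tendsto_subseq hxK
  have hle : ∀ z ∈ K, f z ≤ M := fun z hz => le_csSup hbdd ⟨z, hz, rfl⟩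
  refine ⟨a, haK, fun z hz => ?_⟩
  have hfa : M ≤ f a := by
    by_contra h
    push_neg at h
    have husc := hf a haK ((f a + M) / 2) (by linarith)
    have htend : Tendsto (x ∘ ψ) atTop (nhdsWithin a K) :=
      tendsto_nhdsWithin_of_tendsto_nhds_of_eventually_within _ hconv
        (Eventually.of_forall fun n => hxK (ψ n))
    have hev : ∀ᶠ n in atTop, f (x (ψ n)) < (f a + M) / 2 := htend.eventually husc
    have hδ : (0 : ℝ) < (M - f a) / 2 := by linarith
    have h3 : ∀ᶠ n : ℕ in atTop, 1 / ((n : ℝ) + 1) < (M - f a) / 2 :=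
      tendsto_one_div_add_atTop_nhds_zero_nat.eventually (gt_mem_nhds hδ)
    obtain ⟨n, hn1, hn2⟩ := (hev.and h3).exists
    have h4 : 1 / ((ψ n : ℝ) + 1) ≤ 1 / ((n : ℝ) + 1) := by
      apply one_div_le_one_div_of_le (by positivity)
      have hnle : n ≤ ψ n := hψ.le_apply
      have h := Nat.cast_le (α := ℝ) |>.2 hnle
      linarith
    have h5 := hxf (ψ n)
    linarith
  exact (hle z hz).trans hfa

/-- The standard perturbation lemma in Perron's method: if the upper semicontinuous
envelope of `sup_i u_i` minus a continuous `φ` has a strict interior maximum `0` at `p₀`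
over a compact set `K`, then there are indices `ι' n`, points `y n → p₀` and constants
`c n → 0` such that `u_{ι' n} − (φ + c n)` has a local maximum at `y n` and
`u_{ι' n}(y n) → u*(p₀)`. -/
theorem stmt_18 {d : ℕ} {ι : Type*} [Nonempty ι]
    (u : ι → EuclideanSpace ℝ (Fin d) × ℝ → ℝ)
    (husc : ∀ i, UpperSemicontinuous (u i))
    (B : ℝ) (hB : ∀ i p, u i p ≤ B)
    (K : Set (EuclideanSpace ℝ (Fin d) × ℝ)) (hK : IsCompact K)
    (φ : EuclideanSpace ℝ (Fin d) × ℝ → ℝ) (hφ : ContinuousOn φ K)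
    (p₀ : EuclideanSpace ℝ (Fin d) × ℝ) (hp₀ : p₀ ∈ interior K)
    (ustar : EuclideanSpace ℝ (Fin d) × ℝ → ℝ)
    (hustar : ustar = fun p => ⨅ r : {r : ℝ // 0 < r},
      sSup ((fun q : EuclideanSpace ℝ (Fin d) × ℝ => ⨆ i, u i q) ''
        Metric.ball p (r : ℝ)))
    (heq : ustar p₀ = φ p₀)
    (hstrict : ∀ q ∈ K, q ≠ p₀ → ustar q < φ q) :
    ∃ (ι' : ℕ → ι) (y : ℕ → EuclideanSpace ℝ (Fin d) × ℝ) (c : ℕ → ℝ),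
      Tendsto c atTop (nhds 0) ∧
      Tendsto y atTop (nhds p₀) ∧
      Tendsto (fun n => u (ι' n) (y n)) atTop (nhds (ustar p₀)) ∧
      ∀ n, y n ∈ K ∧
        IsLocalMax (fun q => u (ι' n) q - (φ q + c n)) (y n) := by
  set U : EuclideanSpace ℝ (Fin d) × ℝ → ℝ := fun q => ⨆ i, u i q with hUdef
  have hbddR : ∀ q : EuclideanSpace ℝ (Fin d) × ℝ, BddAbove (Set.range fun i => u i q) := fun q =>
    ⟨B, by rintro _ ⟨i, rfl⟩; exact hB i q⟩
  have hUB : ∀ q : EuclideanSpace ℝ (Fin d) × ℝ, U q ≤ B := fun q => ciSup_le fun i => hB i q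
  have hSbdd : ∀ (z : EuclideanSpace ℝ (Fin d) × ℝ) (r : ℝ), BddAbove (U '' Metric.ball z r) := fun z r =>
    ⟨B, by rintro _ ⟨q, _, rfl⟩; exact hUB q⟩
  have hSne : ∀ (z : EuclideanSpace ℝ (Fin d) × ℝ) (r : ℝ), 0 < r → (U '' Metric.ball z r).Nonempty := fun z r hr =>
    ⟨U z, z, Metric.mem_ball_self hr, rfl⟩
  have hule : ∀ (i : ι) (q : EuclideanSpace ℝ (Fin d) × ℝ), u i q ≤ ustar q := by
    intro i q
    rw [hustar]
    refine le_ciInf fun r => ?_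
    exact (le_ciSup (hbddR q) i).trans
      (le_csSup (hSbdd q r) ⟨q, Metric.mem_ball_self r.2, rfl⟩)
  have hKp₀ : p₀ ∈ K := interior_subset hp₀
  have hKne : K.Nonempty := ⟨p₀, hKp₀⟩
  -- the key "limsup" estimate
  have hlimsup : ∀ (z : EuclideanSpace ℝ (Fin d) × ℝ) (j : ℕ → ι) (w : ℕ → (EuclideanSpace ℝ (Fin d) × ℝ)) (L : ℝ),
      Tendsto w atTop (nhds z) → Tendsto (fun n => u (j n) (w n)) atTop (nhds L) →
      L ≤ ustar z := by
    intro z j w L hw hL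
    rw [hustar]
    refine le_ciInf fun r => ?_
    refine le_of_tendsto hL ?_
    have hev : ∀ᶠ n in atTop, w n ∈ Metric.ball z (r : ℝ) :=
      hw (Metric.ball_mem_nhds z r.2)
    filter_upwards [hev] with n hn
    exact (le_ciSup (hbddR (w n)) (j n)).trans (le_csSup (hSbdd z r) ⟨w n, hn, rfl⟩)
  -- a ball around p₀ inside K
  obtain ⟨ρ, hρ, hball⟩ := Metric.mem_nhds_iff.1 (isOpen_interior.mem_nhds hp₀)
  set ε : ℕ → ℝ := fun n => min ρ (1 / (n + 1)) with hεdef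
  have hεpos : ∀ n, 0 < ε n := fun n => lt_min hρ (by positivity)
  have hεle : ∀ n, ε n ≤ 1 / (n + 1) := fun n => min_le_right _ _
  -- select near-optimizing points and indices
  have hsel : ∀ n : ℕ, ∃ (i : ι) (q : EuclideanSpace ℝ (Fin d) × ℝ),
      q ∈ Metric.ball p₀ (ε n) ∧ ustar p₀ - 1 / (n + 1) < u i q := by
    intro n
    have hstarle : ustar p₀ ≤ sSup (U '' Metric.ball p₀ (ε n)) := by
      rw [hustar]
      have hbb : BddBelow (Set.range fun r : {r : ℝ // 0 < r} =>
          sSup (U '' Metric.ball p₀ (r : ℝ))) := by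
        refine ⟨u (Classical.arbitrary ι) p₀, ?_⟩
        rintro _ ⟨s, rfl⟩
        exact (le_ciSup (hbddR p₀) _).trans
          (le_csSup (hSbdd p₀ s) ⟨p₀, Metric.mem_ball_self s.2, rfl⟩)
      exact ciInf_le hbb ⟨ε n, hεpos n⟩
    have h1 : ustar p₀ - 1 / ((n : ℝ) + 1) < sSup (U '' Metric.ball p₀ (ε n)) := by
      have : (0 : ℝ) < 1 / ((n : ℝ) + 1) := by positivity
      linarith
    obtain ⟨_, ⟨q, hq, rfl⟩, hlt⟩ := exists_lt_of_lt_csSup (hSne p₀ (ε n) (hεpos n)) h1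
    obtain ⟨i, hi⟩ := exists_lt_of_lt_ciSup hlt
    exact ⟨i, q, hq, hi⟩
  choose i q hqball hqu using hsel
  have hqK : ∀ n, q n ∈ K := fun n =>
    interior_subset (hball ((Metric.ball_subset_ball (min_le_left _ _)) (hqball n)))
  have hqdist : ∀ n, dist (q n) p₀ < 1 / (n + 1) := fun n =>
    lt_of_lt_of_le (Metric.mem_ball.1 (hqball n)) (hεle n)
  have hqtend : Tendsto q atTop (nhds p₀) := by
    rw [tendsto_iff_dist_tendsto_zero]
    exact squeeze_zero (fun n => dist_nonneg) (fun n => (hqdist n).le)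
      tendsto_one_div_add_atTop_nhds_zero_nat
  have hqtendW : Tendsto q atTop (nhdsWithin p₀ K) :=
    tendsto_nhdsWithin_of_tendsto_nhds_of_eventually_within _ hqtend
      (Eventually.of_forall hqK)
  have hφq : Tendsto (fun n => φ (q n)) atTop (nhds (φ p₀)) :=
    (hφ p₀ hKp₀).tendsto.comp hqtendW
  -- minimum of φ on K, for bounding u i − φ above
  obtain ⟨zmin, hzminK, hzmin⟩ := hK.exists_isMinOn hKne hφ
  -- maximize u (i n) − φ over K
  have hmaxsel : ∀ n : ℕ, ∃ a ∈ K, ∀ x ∈ K, u (i n) x - φ x ≤ u (i n) a - φ a := by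
    intro n
    refine usc_exists_isMaxOn hK hKne ?_ (m := B - φ zmin) ?_
    · have h1 : UpperSemicontinuousOn (u (i n)) K :=
        (husc (i n)).upperSemicontinuousOn K
      have h2 : UpperSemicontinuousOn (fun x => -φ x) K :=
        (hφ.neg).upperSemicontinuousOn
      have := h1.add h2
      simpa [sub_eq_add_neg] using this
    · intro x hx
      have h1 : φ zmin ≤ φ x := hzmin hx
      have h2 := hB (i n) x
      linarith
  choose y hyK hymax using hmaxsel
  set c : ℕ → ℝ := fun n => u (i n) (y n) - φ (y n) with hcdef
  -- upper bound for c
  have hcub : ∀ n, c n ≤ 0 := by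
    intro n
    have h1 : u (i n) (y n) ≤ ustar (y n) := hule _ _
    rcases eq_or_ne (y n) p₀ with h | h
    · simp only [hcdef, h]
      rw [h] at h1
      linarith
    · have h2 := hstrict (y n) (hyK n) h
      simp only [hcdef]
      linarith
  -- lower bound for c
  have hclb : ∀ n, ustar p₀ - 1 / (n + 1) - φ (q n) ≤ c n := by
    intro n
    have h1 := hymax n (q n) (hqK n)
    have h2 := hqu n
    simp only [hcdef]
    linarith
  -- c → 0
  have hc0 : Tendsto c atTop (nhds 0) := by
    have hlow : Tendsto (fun n : ℕ => ustar p₀ - 1 / (n + 1) - φ (q n)) atTop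
        (nhds (ustar p₀ - 0 - φ p₀)) :=
      (tendsto_const_nhds.sub tendsto_one_div_add_atTop_nhds_zero_nat).sub hφq
    have h0 : ustar p₀ - 0 - φ p₀ = 0 := by rw [heq]; ring
    rw [h0] at hlow
    exact tendsto_of_tendsto_of_tendsto_of_le_of_le hlow tendsto_const_nhds hclb hcub
  -- y → p₀
  have hytend : Tendsto y atTop (nhds p₀) := by
    by_contra hcon
    rw [Metric.tendsto_atTop] at hcon
    push_neg at hcon
    obtain ⟨ε₀, hε₀, hfreq⟩ := hcon
    have hfreq' : ∀ N : ℕ, ∃ n ≥ N, ε₀ ≤ dist (y n) p₀ := hfreq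
    obtain ⟨ψ, hψ, hψd⟩ := extraction_of_frequently_atTop (frequently_atTop.2 hfreq')
    obtain ⟨a, haK, χ, hχ, hconv⟩ := hK.tendsto_subseq (fun n => hyK (ψ n))
    have hθ : StrictMono (ψ ∘ χ) := hψ.comp hχ
    have hθtop : Tendsto (ψ ∘ χ) atTop atTop := hθ.tendsto_atTop
    have hconv' : Tendsto (fun m => y ((ψ ∘ χ) m)) atTop (nhds a) := hconv
    -- a ≠ p₀
    have hdist : ε₀ ≤ dist a p₀ := by
      have h1 : Tendsto (fun m => dist (y ((ψ ∘ χ) m)) p₀) atTop (nhds (dist a p₀)) :=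
        (Continuous.dist continuous_id continuous_const).continuousAt.tendsto.comp hconv'
      exact ge_of_tendsto h1 (Eventually.of_forall fun m => hψd (χ m))
    have hane : a ≠ p₀ := by
      intro h
      rw [h, dist_self] at hdist
      linarith
    -- along the subsequence, u (i (θ m)) (y (θ m)) → φ a
    have hcθ : Tendsto (fun m => c ((ψ ∘ χ) m)) atTop (nhds 0) := hc0.comp hθtop
    have hyW : Tendsto (fun m => y ((ψ ∘ χ) m)) atTop (nhdsWithin a K) :=
      tendsto_nhdsWithin_of_tendsto_nhds_of_eventually_within _ hconv'
        (Eventually.of_forall fun m => hyK _)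
    have hφy : Tendsto (fun m => φ (y ((ψ ∘ χ) m))) atTop (nhds (φ a)) :=
      (hφ a haK).tendsto.comp hyW
    have huy : Tendsto (fun m => u (i ((ψ ∘ χ) m)) (y ((ψ ∘ χ) m))) atTop
        (nhds (φ a)) := by
      have : Tendsto (fun m => c ((ψ ∘ χ) m) + φ (y ((ψ ∘ χ) m))) atTop
          (nhds (0 + φ a)) := hcθ.add hφy
      rw [zero_add] at this
      convert this using 2 with m
      simp only [hcdef]
      ring
    have hfinal := hlimsup a (fun m => i ((ψ ∘ χ) m)) (fun m => y ((ψ ∘ χ) m))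
      (φ a) hconv' huy
    have := hstrict a haK hane
    linarith
  -- u (i n) (y n) → ustar p₀
  have hutend : Tendsto (fun n => u (i n) (y n)) atTop (nhds (ustar p₀)) := by
    have hyW : Tendsto y atTop (nhdsWithin p₀ K) :=
      tendsto_nhdsWithin_of_tendsto_nhds_of_eventually_within _ hytend
        (Eventually.of_forall hyK)
    have hφy : Tendsto (fun n => φ (y n)) atTop (nhds (φ p₀)) :=
      (hφ p₀ hKp₀).tendsto.comp hyW
    have h1 : Tendsto (fun n => c n + φ (y n)) atTop (nhds (0 + φ p₀)) := hc0.add hφy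
    rw [zero_add, ← heq] at h1
    convert h1 using 2 with n
    simp only [hcdef]
    ring
  -- eventually, y n lies in the interior of K
  have hev : ∀ᶠ n in atTop, y n ∈ interior K := hytend (isOpen_interior.mem_nhds hp₀)
  obtain ⟨N, hN⟩ := eventually_atTop.1 hev
  -- shift all sequences by N
  refine ⟨fun n => i (n + N), fun n => y (n + N), fun n => c (n + N), ?_, ?_, ?_, ?_⟩
  · exact hc0.comp (tendsto_add_atTop_nat N)
  · exact hytend.comp (tendsto_add_atTop_nat N)
  · exact hutend.comp (tendsto_add_atTop_nat N)
  · intro n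
    refine ⟨hyK (n + N), ?_⟩
    have hint : y (n + N) ∈ interior K := hN (n + N) (Nat.le_add_left N n)
    rw [IsLocalMax, IsMaxFilter]
    filter_upwards [isOpen_interior.mem_nhds hint] with z hz
    have h1 := hymax (n + N) z (interior_subset hz)
    simp only [hcdef]
    linarith
end
end
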